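/- arXiv:2112.06039 — 5 statements merged into one kernel-verified Lean document; each statement's English description precedes it below -/
import Mathlib

section
/- The forward-propagation algorithm terminates on well-formed, acyclic string constraints: if (S, Concat, Reg) is well-formed and there exists a layering list l with acyclic S Concat l, then in each iteration of Forward_Prop the ready set C is nonempty (as long as S is nonempty), hence the loop, which removes C from S in each iteration, terminates since S is finite. -/
open Classical

variable {V a : Type}

/-- Concatenation of two languages. -/
def langConcat (L1 L2 : Set (List a)) : Set (List a) :=
  {w | ∃ w1 w2, w = w1 ++ w2 ∧ w1 ∈ L1 ∧ w2 ∈ L2}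

/-- Well-formedness of a string constraint `(S, Concat, Reg)`:
`S` is finite and all variables mentioned by `Concat` lie in `S`
(`Reg` is a total map, so `dom Reg = S` is implicit). -/
def WfConstr (S : Set V) (Concat : V → Set (V × V))
    (_Reg : V → Set (List a)) : Prop :=
  S.Finite ∧ ∀ v, (Concat v ≠ ∅ → v ∈ S) ∧
    ∀ p ∈ Concat v, p.1 ∈ S ∧ p.2 ∈ S

/-- The acyclicity predicate: `l` is a list of disjoint layers covering `S`,
each variable's dependencies lying in strictly later layers. -/
def Acyclic (Concat : V → Set (V × V)) : Set V → List (Set V) → Prop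
  | S, [] => S = ∅
  | S, s :: l' =>
      S = s ∪ (⋃ t ∈ l', t) ∧
      Disjoint s (⋃ t ∈ l', t) ∧
      (∀ v ∈ s, ∀ p ∈ Concat v, p.1 ∈ (⋃ t ∈ l', t) ∧ p.2 ∈ (⋃ t ∈ l', t)) ∧
      Acyclic Concat (S \ s) l'

/-- The set of variables of `S` all of whose dependence variables lie in `R`. -/
def ReadySet (S : Set V) (Concat : V → Set (V × V)) (R : Set V) : Set V :=
  {v ∈ S | ∀ p ∈ Concat v, p.1 ∈ R ∧ p.2 ∈ R}

/-- Refine the regular constraints of the variables in `C` by propagating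
their concatenation constraints. -/
noncomputable def VarLang (C : Set V) (Concat : V → Set (V × V))
    (Reg : V → Set (List a)) : V → Set (List a) := fun v =>
  if v ∈ C then
    Reg v ∩ ⋂ p ∈ Concat v, langConcat (Reg p.1) (Reg p.2)
  else Reg v

/-- The forward-propagation loop, with fuel. -/
noncomputable def ForwardPropAux (Concat : V → Set (V × V)) :
    ℕ → Set V → Set V → (V → Set (List a)) → (V → Set (List a))
  | 0, _, _, Reg => Reg
  | n + 1, S, R, Reg =>
      if S = ∅ then Reg
      else
        let C := ReadySet S Concat R
        ForwardPropAux Concat n (S \ C) (R ∪ C) (VarLang C Concat Reg)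

/-- The forward-propagation algorithm. -/
noncomputable def ForwardProp (S : Set V) (Concat : V → Set (V × V))
    (Reg : V → Set (List a)) : V → Set (List a) :=
  ForwardPropAux Concat S.ncard S ∅ Reg

/-- Satisfiability of a string constraint by an assignment `μ`. -/
def SatStr (S : Set V) (Concat : V → Set (V × V))
    (Reg : V → Set (List a)) (μ : V → List a) : Prop :=
  (∀ v ∈ S, μ v ∈ Reg v) ∧
  ∀ v ∈ S, ∀ p ∈ Concat v, μ v = μ p.1 ++ μ p.2

lemma acyclic_ready_aux {V : Type} (Concat : V → Set (V × V)) :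
    ∀ (l : List (Set V)) (T S' : Set V), Acyclic Concat T l → S' ⊆ T →
      S'.Nonempty →
      ∃ v ∈ S', ∀ p ∈ Concat v, p.1 ∈ T \ S' ∧ p.2 ∈ T \ S' := by
  intro l
  induction l with
  | nil =>
      intro T S' hacy hsub ⟨v, hv⟩
      exact absurd (hacy ▸ hsub hv) (Set.notMem_empty v)
  | cons s l' ih =>
      intro T S' hacy hsub hne
      obtain ⟨hT, hdisj, hdep, hrec⟩ := hacy
      set U : Set V := ⋃ t ∈ l', t with hU
      by_cases hcase : (S' ∩ U).Nonempty
      · obtain ⟨v, hv, hdeps⟩ := ih (T \ s) (S' ∩ U) hrec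
          (fun x ⟨hx1, hx2⟩ => ⟨hsub hx1, fun hxs => hdisj.ne_of_mem hxs hx2 rfl⟩)
          hcase
        refine ⟨v, hv.1, fun p hp => ?_⟩
        obtain ⟨⟨⟨h1T, h1s⟩, h1n⟩, ⟨⟨h2T, h2s⟩, h2n⟩⟩ := hdeps p hp
        constructor
        · refine ⟨h1T, fun h1S' => h1n ⟨h1S', ?_⟩⟩
          rcases hT ▸ hsub h1S' with h | h
          · exact absurd h h1s
          · exact h
        · refine ⟨h2T, fun h2S' => h2n ⟨h2S', ?_⟩⟩
          rcases hT ▸ hsub h2S' with h | h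
          · exact absurd h h2s
          · exact h
      · obtain ⟨v, hv⟩ := hne
        have hvs : v ∈ s := by
          rcases hT ▸ hsub hv with h | h
          · exact h
          · exact absurd ⟨v, hv, h⟩ hcase
        refine ⟨v, hv, fun p hp => ?_⟩
        obtain ⟨h1, h2⟩ := hdep v hvs p hp
        refine ⟨⟨hT ▸ Or.inr h1, fun h => hcase ⟨p.1, h, h1⟩⟩,
                ⟨hT ▸ Or.inr h2, fun h => hcase ⟨p.2, h, h2⟩⟩⟩

/-- Termination of forward-propagation on well-formed, acyclic constraints:
at any point of the loop, where `S'` is the set of not-yet-refined variables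
and `S \ S'` the set of refined ones, the ready set is nonempty as long as
`S'` is nonempty; hence the loop, removing a nonempty set from `S'` in each
iteration of the finite set `S`, terminates. -/
theorem forwardProp_terminates {V a : Type}
    (S : Set V) (Concat : V → Set (V × V)) (Reg : V → Set (List a))
    (hwf : WfConstr S Concat Reg)
    (hacy : ∃ l, Acyclic Concat S l) :
    ∀ S' : Set V, S' ⊆ S → S' ≠ ∅ →
      ReadySet S' Concat (S \ S') ≠ ∅ := by
  intro S' hsub hne
  obtain ⟨l, hacy⟩ := hacy
  obtain ⟨v, hv, hdeps⟩ := acyclic_ready_aux Concat l S S' hacy hsub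
    (Set.nonempty_iff_ne_empty.mpr hne)
  exact fun h => Set.notMem_empty v (h ▸ (⟨hv, hdeps⟩ : v ∈ ReadySet S' Concat (S \ S')))
end

section
/- Correctness of forward-propagation: under well-formedness and acyclicity, the output map Reg' satisfies, for every variable v and word w: w ∈ L(Reg' v) if and only if w ∈ L(Reg v) and for every (v1, v2) ∈ Concat v there exist w1, w2 with w = w1 ++ w2, w1 ∈ L(Reg' v1), and w2 ∈ L(Reg' v2). -/
open Classical

variable {V a : Type}

/-
Each round refines exactly the variables all of whose dependencies are already refined. Hence,
once a dependency-closed set `R` has been refined, every `v ∈ R` carries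
`Reg v ∩ ⋂ (v₁, v₂) ∈ Concat v, L v₁ + L v₂` for the current languages `L` and every other
variable still carries `Reg v`; later rounds never touch the dependencies of `R`, so these
equations persist. Acyclicity gives a rank strictly increasing along dependencies; a pending
variable of maximal rank is always ready, so `S.ncard` rounds refine all of `S`, which contains
every variable with a concatenation constraint.
-/

section ForwardProp

variable {Concat : V → Set (V × V)}

def DepsIn (Concat : V → Set (V × V)) (X Y : Set V) : Prop :=
  ∀ v ∈ X, ∀ p ∈ Concat v, p.1 ∈ Y ∧ p.2 ∈ Y

lemma DepsIn.mono {X X' Y Y' : Set V} (h : DepsIn Concat X Y) (hX : X' ⊆ X) (hY : Y ⊆ Y') :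
    DepsIn Concat X' Y' :=
  fun v hv p hp => ⟨hY (h v (hX hv) p hp).1, hY (h v (hX hv) p hp).2⟩

lemma DepsIn.union {X X' Y : Set V} (h : DepsIn Concat X Y) (h' : DepsIn Concat X' Y) :
    DepsIn Concat (X ∪ X') Y := by
  rintro v (hv | hv)
  exacts [h v hv, h' v hv]

lemma depsIn_readySet (S R : Set V) : DepsIn Concat (ReadySet S Concat R) R :=
  fun _ hv => hv.2

def IsRank (Concat : V → Set (V × V)) (S : Set V) (rk : V → ℕ) : Prop :=
  ∀ v ∈ S, ∀ p ∈ Concat v, rk v < rk p.1 ∧ rk v < rk p.2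

lemma IsRank.mono {S S' : Set V} {rk : V → ℕ} (h : IsRank Concat S rk) (hS : S' ⊆ S) :
    IsRank Concat S' rk :=
  fun v hv => h v (hS hv)

lemma Acyclic.diff_eq_biUnion {S s : Set V} {l : List (Set V)}
    (h : Acyclic Concat S (s :: l)) : S \ s = ⋃ t ∈ l, t := by
  rw [h.1, Set.union_sdiff_left, h.2.1.symm.sdiff_eq_left]

lemma Acyclic.depsIn_self {S : Set V} {l : List (Set V)} (h : Acyclic Concat S l) :
    DepsIn Concat S S := by
  induction l generalizing S with
  | nil => simp [show S = ∅ from h, DepsIn]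
  | cons s l ih =>
    have hsub : (⋃ t ∈ l, t) ⊆ S := h.diff_eq_biUnion ▸ Set.sdiff_subset
    have htail := ih h.2.2.2
    rw [h.diff_eq_biUnion] at htail
    exact (DepsIn.union (X := s) h.2.2.1 htail).mono h.1.subset hsub

lemma Acyclic.exists_isRank {S : Set V} {l : List (Set V)} (h : Acyclic Concat S l) :
    ∃ rk, IsRank Concat S rk := by
  induction l generalizing S with
  | nil => exact ⟨fun _ => 0, by simp [show S = ∅ from h, IsRank]⟩
  | cons s l ih =>
    obtain ⟨rk, hrk⟩ := ih h.2.2.2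
    have hdeps := h.2.2.2.depsIn_self
    rw [h.diff_eq_biUnion] at hdeps hrk
    refine ⟨fun v => if v ∈ s then 0 else rk v + 1, fun v hv p hp => ?_⟩
    have hv' : v ∈ s ∪ ⋃ t ∈ l, t := h.1 ▸ hv
    have hU : ∀ {u}, u ∈ ⋃ t ∈ l, t → u ∉ s := fun hu hs => Set.disjoint_left.mp h.2.1 hs hu
    rcases hv' with hvs | hvU
    · have hp' := h.2.2.1 v hvs p hp
      simp [hvs, hU hp'.1, hU hp'.2]
    · have hp' := hdeps v hvU p hp
      simp [hU hvU, hU hp'.1, hU hp'.2, hrk v hvU p hp]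

lemma exists_mem_readySet {S R : Set V} {rk : V → ℕ} (hfin : S.Finite) (hne : S.Nonempty)
    (hrk : IsRank Concat S rk) (hdeps : DepsIn Concat S (R ∪ S)) :
    (ReadySet S Concat R).Nonempty := by
  obtain ⟨v, hv, hmax⟩ := hfin.exists_maximalFor rk S hne
  have hnotin : ∀ u, rk v < rk u → u ∈ R ∪ S → u ∈ R := fun u hlt hu =>
    hu.resolve_right fun huS => (hlt.trans_le (hmax huS hlt.le)).false
  refine ⟨v, hv, fun p hp => ?_⟩
  exact ⟨hnotin _ (hrk v hv p hp).1 (hdeps v hv p hp).1,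
    hnotin _ (hrk v hv p hp).2 (hdeps v hv p hp).2⟩

variable {Reg F : V → Set (List a)}

def PropagatedOn (Concat : V → Set (V × V)) (Reg F : V → Set (List a)) (R : Set V) : Prop :=
  ∀ v, F v = if v ∈ R then Reg v ∩ ⋂ p ∈ Concat v, langConcat (F p.1) (F p.2) else Reg v

lemma propagatedOn_empty : PropagatedOn Concat Reg Reg ∅ := by
  simp [PropagatedOn]

lemma iInter_langConcat_congr {G : V → Set (List a)} {v : V}
    (h : ∀ p ∈ Concat v, G p.1 = F p.1 ∧ G p.2 = F p.2) :
    ⋂ p ∈ Concat v, langConcat (G p.1) (G p.2) = ⋂ p ∈ Concat v, langConcat (F p.1) (F p.2) :=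
  Set.iInter₂_congr fun p hp => by rw [(h p hp).1, (h p hp).2]

lemma PropagatedOn.varLang {R C : Set V} (hF : PropagatedOn Concat Reg F R)
    (hR : DepsIn Concat R R) (hC : DepsIn Concat C R) (hCR : Disjoint C R) :
    PropagatedOn Concat Reg (VarLang C Concat F) (R ∪ C) := by
  have hfix : ∀ u ∈ R, VarLang C Concat F u = F u := fun u hu =>
    if_neg fun huC => Set.disjoint_left.mp hCR huC hu
  have hdeps : ∀ v ∈ R ∪ C, ∀ p ∈ Concat v,
      VarLang C Concat F p.1 = F p.1 ∧ VarLang C Concat F p.2 = F p.2 := fun v hv p hp =>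
    ⟨hfix _ ((hR.union hC) v hv p hp).1, hfix _ ((hR.union hC) v hv p hp).2⟩
  intro v
  by_cases hvC : v ∈ C
  · have hvR : v ∉ R := Set.disjoint_left.mp hCR hvC
    rw [if_pos (Set.mem_union_right R hvC), iInter_langConcat_congr (hdeps v (Or.inr hvC))]
    simp only [VarLang, if_pos hvC, hF v, if_neg hvR]
  · rw [show VarLang C Concat F v = F v from if_neg hvC, hF v]
    by_cases hvR : v ∈ R
    · rw [if_pos hvR, if_pos (Set.mem_union_left C hvR),
        iInter_langConcat_congr (hdeps v (Or.inl hvR))]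
    · rw [if_neg hvR, if_neg (by simp [hvR, hvC])]

lemma PropagatedOn.eq_inter {R : Set V} (hF : PropagatedOn Concat Reg F R)
    (hR : ∀ v, Concat v ≠ ∅ → v ∈ R) (v : V) :
    F v = Reg v ∩ ⋂ p ∈ Concat v, langConcat (F p.1) (F p.2) := by
  by_cases hv : v ∈ R
  · rw [hF v, if_pos hv]
  · rw [hF v, if_neg hv, not_imp_comm.mp (hR v) hv]
    simp

lemma forwardPropAux_empty (n : ℕ) (R : Set V) (F : V → Set (List a)) :
    ForwardPropAux Concat n ∅ R F = F := by
  cases n <;> simp [ForwardPropAux]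

lemma propagatedOn_forwardPropAux {n : ℕ} {S R : Set V} {rk : V → ℕ}
    (hfin : S.Finite) (hn : S.ncard ≤ n) (hrk : IsRank Concat S rk)
    (hS : DepsIn Concat S (R ∪ S)) (hR : DepsIn Concat R R) (hRS : Disjoint R S)
    (hF : PropagatedOn Concat Reg F R) :
    PropagatedOn Concat Reg (ForwardPropAux Concat n S R F) (R ∪ S) := by
  induction n generalizing S R F with
  | zero =>
    obtain rfl : S = ∅ := (Set.ncard_eq_zero hfin).mp (Nat.le_zero.mp hn)
    simpa [forwardPropAux_empty] using hF
  | succ n ih =>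
    rcases S.eq_empty_or_nonempty with rfl | hne
    · simpa [forwardPropAux_empty] using hF
    set C := ReadySet S Concat R
    have hCS : C ⊆ S := fun _ hv => hv.1
    have hunion : R ∪ C ∪ S \ C = R ∪ S := by rw [Set.union_assoc, Set.union_sdiff_cancel hCS]
    have hlt : (S \ C).ncard < S.ncard := Set.ncard_lt_ncard
      (Set.sdiff_ssubset_left_iff.mpr (by
        simpa [Set.inter_eq_right.mpr hCS] using exists_mem_readySet hfin hne hrk hS)) hfin
    rw [ForwardPropAux, if_neg hne.ne_empty, ← hunion]
    exact ih (hfin.subset Set.sdiff_subset) (Nat.le_of_lt_succ (hlt.trans_le hn))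
      (hrk.mono Set.sdiff_subset) (hS.mono Set.sdiff_subset hunion.ge)
      ((hR.union (depsIn_readySet S R)).mono le_rfl Set.subset_union_left)
      (Set.disjoint_union_left.mpr ⟨hRS.mono_right Set.sdiff_subset, Set.disjoint_sdiff_right⟩)
      (hF.varLang hR (depsIn_readySet S R) (hRS.symm.mono_left hCS))

end ForwardProp

/-- Correctness of forward-propagation (Theorem 1). -/
theorem forwardProp_correct {V a : Type}
    (S : Set V) (Concat : V → Set (V × V)) (Reg : V → Set (List a))
    (hwf : WfConstr S Concat Reg)
    (hacy : ∃ l, Acyclic Concat S l) :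
    ∀ (v : V) (w : List a),
      w ∈ ForwardProp S Concat Reg v ↔
        (w ∈ Reg v ∧
          ∀ p ∈ Concat v, ∃ w1 w2, w = w1 ++ w2 ∧
            w1 ∈ ForwardProp S Concat Reg p.1 ∧
            w2 ∈ ForwardProp S Concat Reg p.2) := by
  obtain ⟨hfin, hwf⟩ := hwf
  obtain ⟨l, hl⟩ := hacy
  obtain ⟨rk, hrk⟩ := hl.exists_isRank
  have hprop : PropagatedOn Concat Reg (ForwardProp S Concat Reg) S := by
    simpa [ForwardProp] using propagatedOn_forwardPropAux (R := ∅) hfin le_rfl hrk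
      (fun v _ p hp => by simpa using (hwf v).2 p hp) (by simp [DepsIn])
      (Set.empty_disjoint S) propagatedOn_empty
  intro v w
  rw [hprop.eq_inter fun v => (hwf v).1]
  simp only [Set.mem_inter_iff, Set.mem_iInter]
  rfl
end

section
/- Soundness for unsatisfiability: if (S, Concat, Reg) is well-formed and acyclic, and the output Reg' of forward-propagation assigns the empty language to some variable v (L(Reg' v) = ∅), then the string constraint is unsatisfiable, i.e., no assignment μ : S → Σ* satisfies sat_str S Concat Reg μ. -/
open Classical

variable {V a : Type}

theorem forwardPropAux_mem {V a : Type}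
    (S0 : Set V) (Concat : V → Set (V × V)) (μ : V → List a)
    (hwf : ∀ v, ∀ p ∈ Concat v, p.1 ∈ S0 ∧ p.2 ∈ S0)
    (hcat : ∀ v ∈ S0, ∀ p ∈ Concat v, μ v = μ p.1 ++ μ p.2) :
    ∀ n (S R : Set V) (Reg : V → Set (List a)), S ⊆ S0 →
      (∀ v ∈ S0, μ v ∈ Reg v) →
      ∀ v ∈ S0, μ v ∈ ForwardPropAux Concat n S R Reg v := by
  intro n
  induction n with
  | zero => intro S R Reg _ h v hv; exact h v hv
  | succ n ih =>
    intro S R Reg hSsub h v hv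
    rw [ForwardPropAux]
    by_cases hS : S = ∅
    · simp [hS, h v hv]
    · simp only [hS, if_neg, ite_false]
      apply ih _ _ _ (fun x hx => hSsub hx.1) _ v hv
      intro w hw
      unfold VarLang
      by_cases hwC : w ∈ ReadySet S Concat R
      · simp only [hwC, if_pos]
        refine ⟨h w hw, ?_⟩
        simp only [Set.mem_iInter]
        intro p hp
        have hw0 : w ∈ S0 := hSsub hwC.1
        exact ⟨μ p.1, μ p.2, hcat w hw0 p hp,
          h p.1 (hwf w p hp).1, h p.2 (hwf w p hp).2⟩
      · simp only [hwC, if_neg, ite_false]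
        exact h w hw

/-- Soundness of forward-propagation for unsatisfiability (Theorem 2). -/
theorem forwardProp_sound_unsat {V a : Type}
    (S : Set V) (Concat : V → Set (V × V)) (Reg : V → Set (List a))
    (hwf : WfConstr S Concat Reg)
    (hacy : ∃ l, Acyclic Concat S l)
    (hempty : ∃ v ∈ S, ForwardProp S Concat Reg v = ∅) :
    ∀ μ : V → List a, ¬ SatStr S Concat Reg μ := by
  intro μ hsat
  obtain ⟨v, hvS, hv⟩ := hempty
  have := forwardPropAux_mem S Concat μ (fun w p hp => (hwf.2 w).2 p hp)
    hsat.2 S.ncard S ∅ Reg (le_refl _) hsat.1 v hvS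
  rw [ForwardProp] at hv
  rw [hv] at this
  exact this
end

section
/- Correctness of the tree-property check: let l be the list obtained by listing, for each v ∈ S and each pair (v1, v2) ∈ Concat v, the variables v1 and v2. If all elements of l are pairwise distinct, then Concat satisfies the tree property. -/
/-- The tree property for the concatenation-constraint map. -/
def TreeProp {V : Type} (Concat : V → Set (V × V)) : Prop :=
  (∀ v, ∀ p ∈ Concat v, p.1 ≠ p.2) ∧
  (∀ v, ∀ p ∈ Concat v, ∀ q ∈ Concat v, p ≠ q →
    ({p.1, p.2} ∩ {q.1, q.2} : Set V) = ∅) ∧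
  (∀ v v', v ≠ v' → ∀ p ∈ Concat v, ∀ q ∈ Concat v',
    ({p.1, p.2} ∩ {q.1, q.2} : Set V) = ∅)

/-- An "occurrence" on the right-hand side of the concatenation constraints:
for `v ∈ S`, `p ∈ Concat v` and a side `b`, the occurring variable is
`p.1` if `b = true` and `p.2` otherwise.  The hypothesis `hdist` states that
the list of all such occurring variables is pairwise distinct, i.e., that
distinct occurrences always yield distinct variables. -/
theorem checkTree_correct {V : Type} (S : Set V) (Concat : V → Set (V × V))
    (hdom : ∀ v, Concat v ≠ ∅ → v ∈ S)
    (hcod : ∀ v, ∀ p ∈ Concat v, p.1 ∈ S ∧ p.2 ∈ S)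
    (hdist : ∀ (v v' : V) (p p' : V × V) (b b' : Bool),
      p ∈ Concat v → p' ∈ Concat v' →
      (v, p, b) ≠ (v', p', b') →
      (if b then p.1 else p.2) ≠ (if b' then p'.1 else p'.2)) :
    TreeProp Concat := by
  refine ⟨?_, ?_, ?_⟩
  · intro v p hp
    have := hdist v v p p true false hp hp (by simp)
    simpa using this
  · intro v p hp q hq hpq
    ext x
    simp only [Set.mem_inter_iff, Set.mem_insert_iff, Set.mem_singleton_iff,
      Set.mem_empty_iff_false, iff_false, not_and]
    rintro (h1 | h1) (h2 | h2) <;> subst h1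
    · exact hdist v v p q true true hp hq (by simp [hpq]) (by simpa using h2)
    · exact hdist v v p q true false hp hq (by simp [hpq]) (by simpa using h2)
    · exact hdist v v p q false true hp hq (by simp [hpq]) (by simpa using h2)
    · exact hdist v v p q false false hp hq (by simp [hpq]) (by simpa using h2)
  · intro v v' hvv' p hp q hq
    ext x
    simp only [Set.mem_inter_iff, Set.mem_insert_iff, Set.mem_singleton_iff,
      Set.mem_empty_iff_false, iff_false, not_and]
    rintro (h1 | h1) (h2 | h2) <;> subst h1
    · exact hdist v v' p q true true hp hq (by simp [hvv']) (by simpa using h2)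
    · exact hdist v v' p q true false hp hq (by simp [hvv']) (by simpa using h2)
    · exact hdist v v' p q false true hp hq (by simp [hvv']) (by simpa using h2)
    · exact hdist v v' p q false false hp hq (by simp [hvv']) (by simpa using h2)
end

section
/- Every satisfying assignment is preserved by forward-propagation: under well-formedness and acyclicity, if μ satisfies sat_str S Concat Reg μ, then for every v ∈ S, μ v ∈ L(Reg' v), where Reg' is the output of forward-propagation. -/
open Classical

variable {V a : Type}

lemma forwardPropAux_preserves {V a : Type}
    (S : Set V) (Concat : V → Set (V × V))
    (hwf : ∀ v, (Concat v ≠ ∅ → v ∈ S) ∧ ∀ p ∈ Concat v, p.1 ∈ S ∧ p.2 ∈ S)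
    (μ : V → List a)
    (hconcat : ∀ v ∈ S, ∀ p ∈ Concat v, μ v = μ p.1 ++ μ p.2) :
    ∀ (n : ℕ) (T R : Set V) (Reg' : V → Set (List a)),
      T ⊆ S → (∀ v ∈ S, μ v ∈ Reg' v) →
      ∀ v ∈ S, μ v ∈ ForwardPropAux Concat n T R Reg' v := by
  intro n
  induction n with
  | zero => intro T R Reg' _ hinv v hv; simpa [ForwardPropAux] using hinv v hv
  | succ n ih =>
    intro T R Reg' hTS hinv v hv
    rw [ForwardPropAux]
    by_cases hT : T = ∅
    · simp only [hT, if_pos rfl]; exact hinv v hv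
    · simp only [if_neg hT]
      refine ih _ _ _ (fun x hx => hTS hx.1) ?_ v hv
      intro w hw
      unfold VarLang
      by_cases hwC : w ∈ ReadySet T Concat R
      · simp only [if_pos hwC]
        refine ⟨hinv w hw, ?_⟩
        simp only [Set.mem_iInter]
        intro p hp
        exact ⟨μ p.1, μ p.2, hconcat w hw p hp,
          hinv p.1 ((hwf w).2 p hp).1, hinv p.2 ((hwf w).2 p hp).2⟩
      · simp only [if_neg hwC]; exact hinv w hw

/-- Every satisfying assignment is preserved by forward-propagation. -/
theorem forwardProp_preserves_solutions {V a : Type}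
    (S : Set V) (Concat : V → Set (V × V)) (Reg : V → Set (List a))
    (hwf : WfConstr S Concat Reg)
    (hacy : ∃ l, Acyclic Concat S l)
    (μ : V → List a) (hsat : SatStr S Concat Reg μ) :
    ∀ v ∈ S, μ v ∈ ForwardProp S Concat Reg v := by
  exact forwardPropAux_preserves S Concat hwf.2 μ hsat.2 S.ncard S ∅ Reg
    (le_refl S) hsat.1
end
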